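/- Let γ ∈ (0,2) with γ ≠ 1, and set c := 2^{γ−1}. Let R be the 2×2 real matrix [[1, c],[c, 2c]] and R^{∘2} = [[1, c²],[c², 4c²]] its entrywise square. Then there exists v ∈ ℝ² with vᵀ R v > 0 and vᵀ R^{∘2} v < vᵀ R v. Consequently κ(γ,N) < 1 for all N ≥ 2, where κ(γ,N) is the smallest generalized eigenvalue of the pair (R_H^{∘2}, R_H) with H = γ/2 on {1,…,N}. -/
import Mathlib


/-- The covariance kernel of fractional Brownian motion with Hurst parameter `H`. -/
noncomputable def fbmCov (H s t : ℝ) : ℝ :=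
  (1 / 2) * (|s| ^ (2 * H) + |t| ^ (2 * H) - |s - t| ^ (2 * H))

/-- The Bakry–Émery curvature `κ(γ,N)`: the largest κ such that
`vᵀ R_H^{∘2} v ≥ κ vᵀ R_H v` for all `v`, for the N×N fBM covariance matrix
on {1,…,N} with `H = γ/2` (the smallest generalized eigenvalue of the pair
`(R_H^{∘2}, R_H)`). -/
noncomputable def kappa (γ : ℝ) (N : ℕ) : ℝ :=
  sSup {κ : ℝ | ∀ v : Fin N → ℝ,
    κ * (∑ n : Fin N, ∑ m : Fin N,
        v n * v m * fbmCov (γ / 2) ((n : ℕ) + 1) ((m : ℕ) + 1))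
      ≤ ∑ n : Fin N, ∑ m : Fin N,
        v n * v m * (fbmCov (γ / 2) ((n : ℕ) + 1) ((m : ℕ) + 1)) ^ 2}

lemma fbm_eval (γ : ℝ) (h0 : 0 < γ) :
    fbmCov (γ / 2) 1 1 = 1 ∧ fbmCov (γ / 2) 1 2 = 2 ^ (γ - 1) ∧
    fbmCov (γ / 2) 2 1 = 2 ^ (γ - 1) ∧ fbmCov (γ / 2) 2 2 = 2 * 2 ^ (γ - 1) := by
  have hγ2 : 2 * (γ / 2) = γ := by ring
  have hz : (0 : ℝ) ^ γ = 0 := Real.zero_rpow (ne_of_gt h0)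
  have h2 : (2 : ℝ) ^ γ = 2 * 2 ^ (γ - 1) := by
    rw [show γ = 1 + (γ - 1) by ring, Real.rpow_add (by norm_num), Real.rpow_one]
    ring_nf
  unfold fbmCov
  rw [hγ2]
  norm_num [abs_of_nonneg, Real.one_rpow, hz, h2]
  exact ⟨by ring, by ring⟩

/-- **Strict sub-optimality for γ ≠ 1.** With `c = 2^{γ-1}` and the 2×2 fBM
covariance matrix `R = [[1,c],[c,2c]]`, there is a vector `v` with
`vᵀ R v > 0` and `vᵀ R^{∘2} v < vᵀ R v`; consequently `κ(γ,N) < 1` for all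
`N ≥ 2`. -/
theorem strict_suboptimality (γ : ℝ) (hγ : γ ∈ Set.Ioo (0 : ℝ) 2) (hγ1 : γ ≠ 1)
    (c : ℝ) (hc : c = (2 : ℝ) ^ (γ - 1)) :
    (∃ v : Fin 2 → ℝ,
      0 < (v 0 * v 0 * 1 + v 0 * v 1 * c + v 1 * v 0 * c + v 1 * v 1 * (2 * c)) ∧
      (v 0 * v 0 * 1 + v 0 * v 1 * c ^ 2 + v 1 * v 0 * c ^ 2 + v 1 * v 1 * (4 * c ^ 2))
        < (v 0 * v 0 * 1 + v 0 * v 1 * c + v 1 * v 0 * c + v 1 * v 1 * (2 * c))) ∧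
    ∀ N : ℕ, 2 ≤ N → kappa γ N < 1 := by
  obtain ⟨h0, h2⟩ := hγ
  -- basic facts about c
  have hcpos : 0 < c := by rw [hc]; positivity
  have hc1 : c ≠ 1 := by
    rw [hc]
    intro h
    rcases lt_or_gt_of_ne hγ1 with hlt | hgt
    · have : (2:ℝ) ^ (γ - 1) < 1 :=
        Real.rpow_lt_one_of_one_lt_of_neg (by norm_num) (by linarith)
      linarith
    · have : (1:ℝ) < 2 ^ (γ - 1) :=
        (Real.one_lt_rpow_iff_of_pos (by norm_num)).2 (Or.inl ⟨by norm_num, by linarith⟩)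
      linarith
  have h2c : (2:ℝ) ^ γ = 2 * c := by
    have e : (2:ℝ) ^ (1:ℝ) * 2 ^ (γ - 1) = 2 ^ γ := by
      rw [← Real.rpow_add (by norm_num)]; norm_num
    rw [hc, ← e, Real.rpow_one]
  have hchalf : 1 < 2 * c := by
    rw [← h2c]
    exact (Real.one_lt_rpow_iff_of_pos (by norm_num)).2 (Or.inl ⟨by norm_num, h0⟩)
  have hclt2 : c < 2 := by
    rw [hc]
    calc (2:ℝ) ^ (γ - 1) < 2 ^ (1:ℝ) :=
          (Real.rpow_lt_rpow_left_iff (by norm_num)).2 (by linarith)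
      _ = 2 := Real.rpow_one 2
  -- the witness vector
  set x : ℝ := -2 * (2 * c - 1) / (c - 1) with hxdef
  have hx : x * (c - 1) = -2 * (2 * c - 1) :=
    div_mul_cancel₀ _ (sub_ne_zero.mpr hc1)
  -- quadratic-form values
  have hQpos : 0 < x * x * 1 + x * 1 * c + 1 * x * c + 1 * 1 * (2 * c) := by
    nlinarith [sq_nonneg (x + c)]
  have hQ2pos : 0 < x * x * 1 + x * 1 * c ^ 2 + 1 * x * c ^ 2 + 1 * 1 * (4 * c ^ 2) := by
    nlinarith [sq_nonneg (x + c ^ 2), sq_nonneg c]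
  have hQlt : x * x * 1 + x * 1 * c ^ 2 + 1 * x * c ^ 2 + 1 * 1 * (4 * c ^ 2)
      < x * x * 1 + x * 1 * c + 1 * x * c + 1 * 1 * (2 * c) := by
    nlinarith [hx, hcpos, hchalf]
  refine ⟨⟨![x, 1], ?_, ?_⟩, ?_⟩
  · simpa using hQpos
  · simpa using hQlt
  intro N hN
  obtain ⟨f11, f12, f21, f22⟩ := fbm_eval γ h0
  rw [← hc] at f12 f21 f22
  set i0 : Fin N := ⟨0, by omega⟩ with hi0
  set i1 : Fin N := ⟨1, by omega⟩ with hi1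
  have hne : i0 ≠ i1 := by simp [hi0, hi1, Fin.ext_iff]
  set w : Fin N → ℝ := fun i => if i = i0 then x else if i = i1 then 1 else 0 with hw
  have hw0 : w i0 = x := by simp [hw]
  have hw1 : w i1 = 1 := by simp [hw, hne.symm]
  have hvan : ∀ i : Fin N, i ∉ ({i0, i1} : Finset (Fin N)) → w i = 0 := by
    intro i hi
    simp only [Finset.mem_insert, Finset.mem_singleton, not_or] at hi
    simp [hw, hi.1, hi.2]
  have hsum1 : ∀ G : Fin N → ℝ, (∑ n : Fin N, w n * G n) = x * G i0 + 1 * G i1 := by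
    intro G
    rw [← Finset.sum_subset (Finset.subset_univ {i0, i1})
        (fun i _ hi => by rw [hvan i hi]; ring)]
    rw [Finset.sum_pair hne, hw0, hw1]
  have key : ∀ F : ℝ → ℝ → ℝ,
      (∑ n : Fin N, ∑ m : Fin N, w n * w m * F ((n : ℕ) + 1) ((m : ℕ) + 1))
        = x * (x * F 1 1 + 1 * F 1 2) + 1 * (x * F 2 1 + 1 * F 2 2) := by
    intro F
    have : ∀ n : Fin N, (∑ m : Fin N, w n * w m * F ((n : ℕ) + 1) ((m : ℕ) + 1))
        = w n * (∑ m : Fin N, w m * F ((n : ℕ) + 1) ((m : ℕ) + 1)) := by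
      intro n; rw [Finset.mul_sum]; exact Finset.sum_congr rfl fun m _ => by ring
    simp_rw [this]
    rw [hsum1 (fun n => ∑ m : Fin N, w m * F ((n : ℕ) + 1) ((m : ℕ) + 1)),
        hsum1 (fun m => F ((i0 : ℕ) + 1) ((m : ℕ) + 1)),
        hsum1 (fun m => F ((i1 : ℕ) + 1) ((m : ℕ) + 1))]
    norm_num [hi0, hi1]
  -- the two quadratic forms for w
  have hQN : (∑ n : Fin N, ∑ m : Fin N,
      w n * w m * fbmCov (γ / 2) ((n : ℕ) + 1) ((m : ℕ) + 1))
      = x * x * 1 + x * 1 * c + 1 * x * c + 1 * 1 * (2 * c) := by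
    rw [key (fun s t => fbmCov (γ / 2) s t)]
    simp only [f11, f12, f21, f22]; ring
  have hQN2 : (∑ n : Fin N, ∑ m : Fin N,
      w n * w m * (fbmCov (γ / 2) ((n : ℕ) + 1) ((m : ℕ) + 1)) ^ 2)
      = x * x * 1 + x * 1 * c ^ 2 + 1 * x * c ^ 2 + 1 * 1 * (4 * c ^ 2) := by
    rw [key (fun s t => (fbmCov (γ / 2) s t) ^ 2)]
    simp only [f11, f12, f21, f22]; ring
  -- bound the sSup
  have hub : kappa γ N ≤ (x * x * 1 + x * 1 * c ^ 2 + 1 * x * c ^ 2 + 1 * 1 * (4 * c ^ 2))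
      / (x * x * 1 + x * 1 * c + 1 * x * c + 1 * 1 * (2 * c)) := by
    apply Real.sSup_le
    · intro κ hκ
      have := hκ w
      rw [hQN, hQN2] at this
      exact (le_div_iff₀ hQpos).2 this
    · positivity
  refine lt_of_le_of_lt hub ?_
  rw [div_lt_one hQpos]
  exact hQlt
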